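/- arXiv:1906.09629 — 2 statements merged into one kernel-verified Lean document; each statement's English description precedes it below -/
import Mathlib

section
/- For every integer n ≥ 2, the derivative of the polynomial B_{n+1} at 0 satisfies B'_{n+1}(0) = (-1)^n / ((n-1) · (n-1)!). -/
/-!
Differentiating term by term and using `k·C(n,k) = n·C(n-1,k-1)`, the value `B'_{n+1}(0)` becomes
`-(1/(n-1)!) ∑_j (-1)^j C(n-1,j) (H_n - H_{n-1-j})`. The `H_n` part vanishes with the alternating
binomial sum, and reflecting `j ↦ n-1-j` reduces the rest to the classical identity
`∑_i (-1)^i C(m,i) H_i = -1/m` for `m ≥ 1`.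
-/

open Finset Polynomial

/-- The polynomials `B n ∈ ℚ[X]`: `B 1 = 0` and, for `n ≥ 1`,
`B (n+1) (s) = -(1/n!) ∑_{k=1}^n binom(n,k) (H_n - H_{n-k}) (s-1)^k`. -/
noncomputable def B : ℕ → Polynomial ℚ
  | 0 => 0
  | n + 1 =>
      Polynomial.C (-(n.factorial : ℚ)⁻¹) *
        ∑ k ∈ Finset.Icc 1 n,
          Polynomial.C ((n.choose k : ℚ) * (harmonic n - harmonic (n - k))) *
            (Polynomial.X - 1) ^ k

theorem sum_range_neg_one_pow_mul_choose_of_ne_zero {R : Type*} [Ring R] {m : ℕ} (hm : m ≠ 0) :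
    ∑ i ∈ range (m + 1), (-1 : R) ^ i * m.choose i = 0 := by
  exact_mod_cast congrArg (Int.cast : ℤ → R) (Int.alternating_sum_range_choose_of_ne hm)

theorem sum_range_neg_one_pow_mul_choose_div_add_one {K : Type*} [Field K] [CharZero K] (m : ℕ) :
    ∑ j ∈ range (m + 1), (-1 : K) ^ j * m.choose j / (j + 1) = 1 / (m + 1) := by
  have hshift : ∑ j ∈ range (m + 1), (-1 : K) ^ j * (m + 1).choose (j + 1) = 1 := by
    have h := sum_range_neg_one_pow_mul_choose_of_ne_zero (R := K) m.succ_ne_zero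
    simp only [sum_range_succ' _ (m + 1), pow_succ, mul_neg_one, neg_mul, sum_neg_distrib,
      pow_zero, Nat.choose_zero_right, Nat.cast_one, mul_one] at h
    linear_combination -h
  have hterm (j : ℕ) : (m.choose j : K) / (j + 1) = (m + 1).choose (j + 1) / (m + 1) := by
    rw [div_eq_div_iff (Nat.cast_add_one_ne_zero j) (Nat.cast_add_one_ne_zero m)]
    exact_mod_cast (mul_comm _ _).trans (Nat.add_one_mul_choose_eq m j)
  calc ∑ j ∈ range (m + 1), (-1 : K) ^ j * m.choose j / (j + 1)
      = (∑ j ∈ range (m + 1), (-1 : K) ^ j * (m + 1).choose (j + 1)) / (m + 1) := by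
        rw [sum_div]
        exact sum_congr rfl fun j _ => by rw [mul_div_assoc, hterm, mul_div_assoc]
    _ = 1 / (m + 1) := by rw [hshift]

/-- Pascal's rule splits the sum for `m + 1` into `-S - ∑ (-1)^j C(m,j)/(j+1)` and `S`, where
`S` is the sum for `m`; so `S` cancels and no induction is needed. -/
theorem sum_range_neg_one_pow_mul_choose_mul_harmonic {m : ℕ} (hm : m ≠ 0) :
    ∑ i ∈ range (m + 1), (-1 : ℚ) ^ i * m.choose i * harmonic i = -1 / m := by
  obtain ⟨m, rfl⟩ := Nat.exists_eq_succ_of_ne_zero hm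
  set S := ∑ i ∈ range (m + 1), (-1 : ℚ) ^ i * m.choose i * harmonic i with hS
  have hlower : ∑ j ∈ range (m + 1), (-1 : ℚ) ^ (j + 1) * m.choose (j + 1) * harmonic (j + 1)
      = S := by
    rw [sum_range_succ, hS, sum_range_succ' _ m]
    simp
  have hupper : ∑ j ∈ range (m + 1), (-1 : ℚ) ^ (j + 1) * m.choose j * harmonic (j + 1)
      = -S - ∑ j ∈ range (m + 1), (-1 : ℚ) ^ j * m.choose j / (j + 1) := by
    rw [← sum_neg_distrib, ← sum_sub_distrib]
    refine sum_congr rfl fun j _ => ?_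
    rw [harmonic_succ]
    push_cast
    field_simp
    ring
  calc ∑ i ∈ range (m + 1 + 1), (-1 : ℚ) ^ i * (m + 1).choose i * harmonic i
      = ∑ j ∈ range (m + 1), ((-1 : ℚ) ^ (j + 1) * m.choose j * harmonic (j + 1)
          + (-1 : ℚ) ^ (j + 1) * m.choose (j + 1) * harmonic (j + 1)) := by
        rw [sum_range_succ']
        simp only [Nat.choose_succ_succ', Nat.cast_add, mul_add, add_mul, harmonic_zero, mul_zero,
          add_zero]
    _ = -1 / (m + 1 : ℕ) := by
        rw [sum_add_distrib, hupper, hlower, sum_range_neg_one_pow_mul_choose_div_add_one]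
        push_cast
        ring

theorem sum_range_neg_one_pow_mul_choose_mul_reflect {R : Type*} [CommRing R] (m : ℕ)
    (f : ℕ → R) :
    ∑ j ∈ range (m + 1), (-1 : R) ^ j * m.choose j * f (m - j)
      = (-1) ^ m * ∑ i ∈ range (m + 1), (-1 : R) ^ i * m.choose i * f i := by
  rw [← sum_range_reflect, mul_sum]
  refine sum_congr rfl fun j hj => ?_
  have hjm : j ≤ m := Nat.lt_succ_iff.mp (mem_range.mp hj)
  have hsign : (-1 : R) ^ (m - j) = (-1) ^ m * (-1) ^ j := by
    rw [← pow_sub_mul_pow (-1 : R) hjm, mul_assoc, ← pow_add, ← two_mul, pow_mul]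
    simp
  simp only [Nat.add_sub_cancel, Nat.sub_sub_self hjm, Nat.choose_symm hjm, hsign]
  ring

theorem derivative_B_add_two_eval_zero (m : ℕ) :
    (derivative (B (m + 2))).eval 0 = -(m.factorial : ℚ)⁻¹ *
      ∑ j ∈ range (m + 1), (-1) ^ j * m.choose j * (harmonic (m + 1) - harmonic (m - j)) := by
  simp only [B, derivative_C_mul, derivative_sum, derivative_pow, derivative_sub, derivative_X,
    derivative_one, sub_zero, mul_one, eval_mul, eval_C, eval_finsetSum, eval_pow, eval_sub,
    eval_X, eval_one]
  rw [← Ico_add_one_right_eq_Icc, sum_Ico_eq_sum_range, Nat.add_sub_cancel]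
  have hterm (j : ℕ) :
      ((m + 1).choose (1 + j) : ℚ) * (harmonic (m + 1) - harmonic (m + 1 - (1 + j)))
        * (((1 + j : ℕ) : ℚ) * (0 - 1) ^ (1 + j - 1))
      = (m + 1) * ((-1) ^ j * m.choose j * (harmonic (m + 1) - harmonic (m - j))) := by
    have hchoose : ((m + 1).choose (j + 1) : ℚ) * (j + 1) = (m + 1) * m.choose j := by
      exact_mod_cast (Nat.add_one_mul_choose_eq m j).symm
    rw [add_comm 1 j, Nat.add_sub_cancel, Nat.add_sub_add_right]
    push_cast
    linear_combination (-1) ^ j * (harmonic (m + 1) - harmonic (m - j)) * hchoose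
  rw [sum_congr rfl fun j _ => hterm j, ← mul_sum, Nat.factorial_succ]
  push_cast
  field_simp

theorem statement7 (n : ℕ) (hn : 2 ≤ n) :
    (derivative (B (n + 1))).eval 0 = (-1) ^ n / (((n : ℚ) - 1) * ((n - 1).factorial : ℚ)) := by
  obtain ⟨m, rfl⟩ : ∃ m, n = m + 1 := ⟨n - 1, by omega⟩
  have hm : m ≠ 0 := by omega
  have hsum :
      ∑ j ∈ range (m + 1), (-1 : ℚ) ^ j * m.choose j * (harmonic (m + 1) - harmonic (m - j))
        = (-1) ^ m / m := by
    simp only [mul_sub, sum_sub_distrib, ← sum_mul,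
      sum_range_neg_one_pow_mul_choose_of_ne_zero hm,
      sum_range_neg_one_pow_mul_choose_mul_reflect m harmonic,
      sum_range_neg_one_pow_mul_choose_mul_harmonic hm]
    ring
  rw [derivative_B_add_two_eval_zero, hsum, Nat.add_sub_cancel, Nat.cast_add_one,
    add_sub_cancel_right]
  field_simp
  ring
end

section
/- log(3/2) = 65/162 + (1/216) · ∑_{j=0}^∞ (-1)^j / ( 2^j · binom(j+4, 4) ), where log denotes the natural logarithm. -/
/-!
By partial fractions, `1 / binom(j+4, 4) = 4/(j+1) - 12/(j+2) + 12/(j+3) - 4/(j+4)`, so with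
`x = -1/2` the series splits into four tails of the Mercator series
`∑ x^(n+1)/(n+1) = -log (1 - x) = -log (3/2)`; the constant `65/162` collects the
initial terms cut off from those tails.
-/

open Real Finset

theorem hasSum_pow_div_add_of_abs_lt_one {x : ℝ} (hx : |x| < 1) (k : ℕ) :
    HasSum (fun n : ℕ => x ^ (n + k + 1) / (n + k + 1))
      (-log (1 - x) - ∑ i ∈ range k, x ^ (i + 1) / (i + 1)) := by
  simpa [add_right_comm] using (hasSum_nat_add_iff' k).mpr (hasSum_pow_div_log_of_abs_lt_one hx)

theorem inv_choose_add_four (j : ℕ) :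
    (((j + 4).choose 4 : ℕ) : ℝ)⁻¹ = 4 / (j + 1) - 12 / (j + 2) + 12 / (j + 3) - 4 / (j + 4) := by
  rw [add_comm j 4, Nat.cast_add_choose, add_comm 4 j]
  simp only [Nat.factorial, Nat.cast_mul, Nat.cast_succ]
  field_simp
  ring

theorem statement12 :
    Real.log (3 / 2) = 65 / 162 + (1 / 216) *
      ∑' j : ℕ, (-1 : ℝ) ^ j / ((2 : ℝ) ^ j * ((j + 4).choose 4 : ℝ)) := by
  have tail (k : ℕ) := hasSum_pow_div_add_of_abs_lt_one (x := -1 / 2) (by norm_num [abs_of_neg]) k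
  -- the partial-fraction coefficients `4, -12, 12, -4` times `(-2)^(k+1)`
  have hsum := (((((tail 0).mul_left (-8)).add ((tail 1).mul_left (-48))).add
    ((tail 2).mul_left (-96))).add ((tail 3).mul_left (-64))).congr_fun
    (g := fun j : ℕ => (-1 : ℝ) ^ j / ((2 : ℝ) ^ j * ((j + 4).choose 4 : ℝ))) fun j => by
      rw [div_mul_eq_div_div, ← div_pow, div_eq_mul_inv _ (((j + 4).choose 4 : ℕ) : ℝ),
        inv_choose_add_four]
      field_simp
      ring
  rw [hsum.tsum_eq]
  norm_num [sum_range_succ]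
  ring
end
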